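/- For every integer n ≥ 4, the number of cyclic permutations of length n avoiding all three cyclic patterns [1234], [1324], and [1342] equals 3; that is, #Av_n([1234],[1324],[1342]) = 3. -/

import Mathlib

/-
Rotate a cyclic permutation so that its `0` comes first. The patterns `1234`, `1324`, `1342` are
the three ways of adding a `2` to an occurrence of `134`, so `[σ]` avoids all three iff no entry
`σ p` is followed, cyclically, by an ascent `σ a < σ b` with some value strictly between `σ p`
and `σ a`. With `p` the `0`, this forces the entries other than `0` and `1` to decrease, so the
normalized word is `0, n-1, …, 2` with the `1` inserted at some position `k`; with `p` the `1`, it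
excludes every `k` except `1`, `n-2` and `n-1`, and these three words do avoid the patterns.
-/

/-- A sequence `σ` of length `n` (with distinct values) contains the pattern `π`
of length `k` if some subsequence of `σ` is order isomorphic to `π`. -/
def ContainsPat {n k : ℕ} (σ : Fin n → Fin n) (π : Fin k → ℕ) : Prop :=
  ∃ f : Fin k → Fin n, StrictMono f ∧ ∀ i j : Fin k, π i < π j ↔ σ (f i) < σ (f j)

/-- The rotation of the sequence `σ` starting at position `r`. -/
def rotSeq {n : ℕ} (σ : Fin n → Fin n) (r : Fin n) : Fin n → Fin n :=
  fun i => σ (i + r)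

/-- The cyclic permutation `[σ]` contains the cyclic pattern `[π]` if some
rotation of `σ` contains `π` linearly. -/
def CycContains {n k : ℕ} (σ : Fin n → Fin n) (π : Fin k → ℕ) : Prop :=
  ∃ r : Fin n, ContainsPat (rotSeq σ r) π

/-- The cyclic permutation `[σ]` avoids the cyclic pattern `[π]`. -/
def CycAvoids {n k : ℕ} (σ : Fin n → Fin n) (π : Fin k → ℕ) : Prop :=
  ¬ CycContains σ π

/-- The cyclic permutation `[σ]`, i.e. the set of all rotations of `σ`. -/
def CycClass {n : ℕ} (σ : Fin n → Fin n) : Set (Fin n → Fin n) :=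
  Set.range (rotSeq σ)

/-- The set of cyclic permutations (rotation classes) of length `n` all of whose
representatives are permutations and which satisfy the (rotation-invariant)
predicate `P`. -/
def AvClasses (n : ℕ) (P : (Fin n → Fin n) → Prop) : Set (Set (Fin n → Fin n)) :=
  { C | ∃ σ : Equiv.Perm (Fin n), C = CycClass ⇑σ ∧ P ⇑σ }

/-- The cyclic descent number: the number of indices `i` (mod `n`) with
`σ i > σ (i+1)`. -/
def cdes {n : ℕ} (σ : Fin n → Fin n) : ℕ :=
  (Finset.univ.filter fun i : Fin n =>
    σ ⟨(↑i + 1) % n, Nat.mod_lt _ i.pos⟩ < σ i).card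

/-- The cyclic peak number: the number of indices `i` (mod `n`) with
`σ (i-1) < σ i > σ (i+1)`. -/
def cpk {n : ℕ} (σ : Fin n → Fin n) : ℕ :=
  (Finset.univ.filter fun i : Fin n =>
    σ ⟨(↑i + (n - 1)) % n, Nat.mod_lt _ i.pos⟩ < σ i ∧
    σ ⟨(↑i + 1) % n, Nat.mod_lt _ i.pos⟩ < σ i).card


section Patterns

variable {α : Type*} [LinearOrder α] (x : Fin 4 → α)

lemma pattern_1234_iff :
    (∀ i j, ![1, 2, 3, 4] i < ![1, 2, 3, 4] j ↔ x i < x j) ↔ x 0 < x 1 ∧ x 1 < x 2 ∧ x 2 < x 3 := by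
  refine ⟨fun h => ⟨(h 0 1).1 (by decide), (h 1 2).1 (by decide), (h 2 3).1 (by decide)⟩,
    fun ⟨h₁, h₂, h₃⟩ i j => ?_⟩
  fin_cases i <;> fin_cases j <;> simp <;> order

lemma pattern_1324_iff :
    (∀ i j, ![1, 3, 2, 4] i < ![1, 3, 2, 4] j ↔ x i < x j) ↔ x 0 < x 2 ∧ x 2 < x 1 ∧ x 1 < x 3 := by
  refine ⟨fun h => ⟨(h 0 2).1 (by decide), (h 2 1).1 (by decide), (h 1 3).1 (by decide)⟩,
    fun ⟨h₁, h₂, h₃⟩ i j => ?_⟩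
  fin_cases i <;> fin_cases j <;> simp <;> order

lemma pattern_1342_iff :
    (∀ i j, ![1, 3, 4, 2] i < ![1, 3, 4, 2] j ↔ x i < x j) ↔ x 0 < x 3 ∧ x 3 < x 1 ∧ x 1 < x 2 := by
  refine ⟨fun h => ⟨(h 0 3).1 (by decide), (h 3 1).1 (by decide), (h 1 2).1 (by decide)⟩,
    fun ⟨h₁, h₂, h₃⟩ i j => ?_⟩
  fin_cases i <;> fin_cases j <;> simp <;> order

end Patterns

lemma strictMono_fin_four_iff {β : Type*} [Preorder β] {g : Fin 4 → β} :
    StrictMono g ↔ g 0 < g 1 ∧ g 1 < g 2 ∧ g 2 < g 3 := by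
  simp [Fin.strictMono_iff_lt_succ, Fin.forall_fin_succ]

lemma Fin.val_sub_eq_ite {n : ℕ} (a b : Fin n) :
    ((a - b : Fin n) : ℕ) = if b ≤ a then (a : ℕ) - b else n + a - b := by
  split_ifs with h
  · exact Fin.coe_sub_iff_le.2 h
  · exact Fin.coe_sub_iff_lt.2 (not_le.1 h)

lemma Fin.eq_of_lt_iff_lt {n : ℕ} {σ τ : Fin n → Fin n} (hτ : Function.Injective τ)
    (h : ∀ i j, σ i < σ j ↔ τ i < τ j) : σ = τ := by
  let e := Equiv.ofBijective τ (Finite.injective_iff_bijective.1 hτ)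
  have he : ∀ a, τ (e.symm a) = a := e.apply_symm_apply
  have hmono : StrictMono (σ ∘ e.symm) := fun a b hab => by
    rwa [Function.comp_apply, Function.comp_apply, h, he, he]
  funext i
  simpa [e] using congrFun hmono.eq_id (τ i)

section Cyclic

variable {n : ℕ} [NeZero n]

lemma cycContains_iff {k : ℕ} (σ : Fin n → Fin n) (π : Fin (k + 1) → ℕ) :
    CycContains σ π ↔ ∃ f : Fin (k + 1) → Fin n,
      StrictMono (fun i => f i - f 0) ∧ ∀ i j, π i < π j ↔ σ (f i) < σ (f j) := by
  constructor
  · rintro ⟨r, g, hg, hπ⟩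
    refine ⟨fun i => g i + r, fun i j hij => ?_, hπ⟩
    have h₀ : ∀ i, g 0 ≤ g i := fun i => hg.monotone (Fin.zero_le i)
    have hlt := hg hij
    simp only [add_sub_add_right_eq_sub, Fin.lt_def, Fin.coe_sub_iff_le.2 (h₀ _)] at hlt ⊢
    have := h₀ i
    rw [Fin.le_def] at this
    omega
  · rintro ⟨f, hf, hπ⟩
    exact ⟨f 0, fun i => f i - f 0, hf, fun i j => by
      simpa only [rotSeq, sub_add_cancel] using hπ i j⟩

lemma rotSeq_zero (σ : Fin n → Fin n) : rotSeq σ 0 = σ :=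
  funext fun i => by rw [rotSeq, add_zero]

lemma rotSeq_rotSeq (σ : Fin n → Fin n) (r s : Fin n) : rotSeq (rotSeq σ r) s = rotSeq σ (s + r) :=
  funext fun i => by simp only [rotSeq, add_assoc]

lemma cycContains_rotSeq {k : ℕ} (σ : Fin n → Fin n) (r : Fin n) (π : Fin k → ℕ) :
    CycContains (rotSeq σ r) π ↔ CycContains σ π := by
  constructor
  · rintro ⟨s, hs⟩; exact ⟨s + r, by rwa [rotSeq_rotSeq] at hs⟩
  · rintro ⟨s, hs⟩; exact ⟨s - r, by rwa [rotSeq_rotSeq, sub_add_cancel]⟩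

lemma cycClass_rotSeq (σ : Fin n → Fin n) (r : Fin n) : CycClass (rotSeq σ r) = CycClass σ := by
  ext τ
  constructor
  · rintro ⟨s, rfl⟩; exact ⟨s + r, (rotSeq_rotSeq σ r s).symm⟩
  · rintro ⟨s, rfl⟩; exact ⟨s - r, by rw [rotSeq_rotSeq, sub_add_cancel]⟩

lemma exists_rotSeq_apply_zero (τ : Equiv.Perm (Fin n)) :
    ∃ ρ : Equiv.Perm (Fin n), ρ 0 = 0 ∧ ⇑ρ = rotSeq τ (τ.symm 0) :=
  ⟨(Equiv.addRight (τ.symm 0)).trans τ, by simp, rfl⟩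

lemma eq_of_cycClass_eq {σ τ : Fin n → Fin n} (hσ : Function.Injective σ) (hσ₀ : σ 0 = 0)
    (hτ₀ : τ 0 = 0) (h : CycClass σ = CycClass τ) : σ = τ := by
  obtain ⟨r, rfl⟩ : τ ∈ CycClass σ := h ▸ ⟨0, rotSeq_zero τ⟩
  obtain rfl : r = 0 := hσ (by simpa [rotSeq, hσ₀] using hτ₀)
  exact (rotSeq_zero σ).symm

/-- Reading cyclically from `p`, the entries at `a`, `b` form a `34` above the `1` at `p`, and `c`
is a `2` placed anywhere. -/
def HasBadQuadruple (σ : Fin n → Fin n) : Prop :=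
  ∃ p a b c : Fin n, a - p < b - p ∧ σ p < σ c ∧ σ c < σ a ∧ σ a < σ b

lemma hasBadQuadruple_iff (σ : Fin n → Fin n) :
    HasBadQuadruple σ ↔
      CycContains σ ![1, 2, 3, 4] ∨ CycContains σ ![1, 3, 2, 4] ∨ CycContains σ ![1, 3, 4, 2] := by
  simp only [cycContains_iff]
  constructor
  · rintro ⟨p, a, b, c, hcyc, hpc, hca, hab⟩
    have hcp : 0 < c - p := by
      rw [Fin.pos_iff_ne_zero, sub_ne_zero]; rintro rfl; exact lt_irrefl _ hpc
    have hap : 0 < a - p := by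
      rw [Fin.pos_iff_ne_zero, sub_ne_zero]; rintro rfl; exact lt_asymm hpc hca
    have hca' : c - p ≠ a - p := by rw [Ne, sub_left_inj]; rintro rfl; exact lt_irrefl _ hca
    have hcb' : c - p ≠ b - p := by
      rw [Ne, sub_left_inj]; rintro rfl; exact lt_irrefl _ (hca.trans hab)
    rcases lt_or_gt_of_ne hca' with h | h
    · exact Or.inl ⟨![p, c, a, b], strictMono_fin_four_iff.2 (by simpa using ⟨hcp, h, hcyc⟩),
        (pattern_1234_iff _).2 ⟨hpc, hca, hab⟩⟩
    rcases lt_or_gt_of_ne hcb' with h' | h'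
    · exact Or.inr (Or.inl ⟨![p, a, c, b],
        strictMono_fin_four_iff.2 (by simpa using ⟨hap, h, h'⟩),
        (pattern_1324_iff _).2 ⟨hpc, hca, hab⟩⟩)
    · exact Or.inr (Or.inr ⟨![p, a, b, c],
        strictMono_fin_four_iff.2 (by simpa using ⟨hap, hcyc, h'⟩),
        (pattern_1342_iff _).2 ⟨hpc, hca, hab⟩⟩)
  · rintro (⟨f, hf, h⟩ | ⟨f, hf, h⟩ | ⟨f, hf, h⟩)
    · obtain ⟨-, -, h₂⟩ := strictMono_fin_four_iff.1 hf
      exact ⟨f 0, f 2, f 3, f 1, h₂, (pattern_1234_iff _).1 h⟩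
    · obtain ⟨-, h₁, h₂⟩ := strictMono_fin_four_iff.1 hf
      exact ⟨f 0, f 1, f 3, f 2, h₁.trans h₂, (pattern_1324_iff _).1 h⟩
    · obtain ⟨-, h₁, -⟩ := strictMono_fin_four_iff.1 hf
      exact ⟨f 0, f 1, f 2, f 3, h₁, (pattern_1342_iff _).1 h⟩

lemma hasBadQuadruple_rotSeq (σ : Fin n → Fin n) (r : Fin n) :
    HasBadQuadruple (rotSeq σ r) ↔ HasBadQuadruple σ := by
  simp only [hasBadQuadruple_iff, cycContains_rotSeq]

end Cyclic

section Classification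

variable {n : ℕ}

/-- The word `0, n-1, n-2, …, 2` with `1` inserted at position `k` (for `k ≠ 0`; the `% n` only
makes the definition total). -/
def oneAt (k i : Fin n) : Fin n :=
  ⟨(if (i : ℕ) = 0 then 0 else if (i : ℕ) = k then 1 else n - i + if (k : ℕ) < i then 1 else 0)
    % n, Nat.mod_lt _ i.pos⟩

def admissibleOnePos (n : ℕ) : Set (Fin n) :=
  {k | (k : ℕ) = 1 ∨ (k : ℕ) + 2 = n ∨ (k : ℕ) + 1 = n}

lemma ncard_admissibleOnePos (hn : 4 ≤ n) : (admissibleOnePos n).ncard = 3 := by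
  refine Set.ncard_eq_three.2 ⟨⟨1, by omega⟩, ⟨n - 2, by omega⟩, ⟨n - 1, by omega⟩, ?_, ?_, ?_, ?_⟩
  · simp [Fin.ext_iff]; omega
  · simp [Fin.ext_iff]; omega
  · simp [Fin.ext_iff]; omega
  · ext k
    simp only [admissibleOnePos, Set.mem_ofPred_eq, Set.mem_insert_iff, Set.mem_singleton_iff,
      Fin.ext_iff]
    omega

variable [NeZero n] {k : Fin n}

lemma oneAt_val (hk : k ≠ 0) (i : Fin n) :
    (oneAt k i : ℕ) = if (i : ℕ) = 0 then 0 else if (i : ℕ) = k then 1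
      else n - i + if (k : ℕ) < i then 1 else 0 := by
  have := k.isLt
  have := Fin.val_ne_zero_iff.2 hk
  exact Nat.mod_eq_of_lt (by split_ifs <;> omega)

lemma oneAt_zero (hk : k ≠ 0) : oneAt k 0 = 0 := by
  rw [Fin.ext_iff, oneAt_val hk]; simp

lemma oneAt_self (hk : k ≠ 0) : oneAt k k = 1 := by
  have hk' := Fin.val_ne_zero_iff.2 hk
  rw [Fin.ext_iff, oneAt_val hk, Fin.val_one', Nat.mod_eq_of_lt (by omega)]
  simp [hk']

lemma strictAntiOn_oneAt (hk : k ≠ 0) : StrictAntiOn (oneAt k) {0, k}ᶜ := by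
  intro i hi j hj hij
  simp only [Set.mem_compl_iff, Set.mem_insert_iff, Set.mem_singleton_iff, not_or, Fin.ext_iff,
    Fin.val_zero] at hi hj
  rw [Fin.lt_def] at hij ⊢
  rw [oneAt_val hk, oneAt_val hk]
  split_ifs <;> omega

lemma injective_oneAt (hk : k ≠ 0) : Function.Injective (oneAt k) := by
  intro i j h
  have := congrArg Fin.val h
  rw [oneAt_val hk, oneAt_val hk] at this
  rw [Fin.ext_iff]
  split_ifs at this <;> omega

lemma ne_zero_of_mem_admissibleOnePos (hn : 3 ≤ n) (hk : k ∈ admissibleOnePos n) : k ≠ 0 := by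
  rw [← Fin.val_ne_zero_iff]
  rcases hk with hk | hk | hk <;> omega

variable {σ : Fin n → Fin n}

lemma lt_iff_of_strictAntiOn (hσ : Function.Injective σ) (h₀ : σ 0 = 0) (h₁ : σ k = 1)
    (hanti : StrictAntiOn σ {0, k}ᶜ) (i j : Fin n) :
    σ i < σ j ↔ j ≠ 0 ∧ (i = 0 ∨ j ≠ k ∧ (i = k ∨ j < i)) := by
  have hne₀ : ∀ {i}, i ≠ 0 → σ i ≠ 0 := fun hi h => hi (hσ (h.trans h₀.symm))
  have hne₁ : ∀ {i}, i ≠ k → σ i ≠ 1 := fun hi h => hi (hσ (h.trans h₁.symm))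
  by_cases hj₀ : j = 0
  · simp [hj₀, h₀]
  by_cases hi₀ : i = 0
  · simpa [hi₀, hj₀, h₀, Fin.pos_iff_ne_zero] using hne₀ hj₀
  by_cases hjk : j = k
  · simpa [hi₀, hjk, h₁] using Fin.one_le_of_ne_zero (hne₀ hi₀)
  have hj : j ∈ ({0, k}ᶜ : Set (Fin n)) := by simp [hj₀, hjk]
  by_cases hik : i = k
  · simpa [hik, hjk, hj₀, h₁] using Fin.one_le_of_ne_zero (hne₀ hj₀) |>.lt_of_ne (hne₁ hjk).symm
  have hi : i ∈ ({0, k}ᶜ : Set (Fin n)) := by simp [hi₀, hik]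
  simp [hi₀, hj₀, hjk, hik, hanti.lt_iff_gt hi hj]

lemma eq_oneAt_of_strictAntiOn (hσ : Function.Injective σ) (h₀ : σ 0 = 0) (hk : k ≠ 0)
    (h₁ : σ k = 1) (hanti : StrictAntiOn σ {0, k}ᶜ) : σ = oneAt k :=
  Fin.eq_of_lt_iff_lt (injective_oneAt hk) fun i j => by
    rw [lt_iff_of_strictAntiOn hσ h₀ h₁ hanti, lt_iff_of_strictAntiOn (injective_oneAt hk)
      (oneAt_zero hk) (oneAt_self hk) (strictAntiOn_oneAt hk)]

lemma strictAntiOn_of_not_hasBadQuadruple (hσ : Function.Injective σ) (h₀ : σ 0 = 0)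
    (hk : k ≠ 0) (h₁ : σ k = 1) (hb : ¬HasBadQuadruple σ) : StrictAntiOn σ {0, k}ᶜ := by
  intro i hi j hj hij
  simp only [Set.mem_compl_iff, Set.mem_insert_iff, Set.mem_singleton_iff, not_or] at hi hj
  have hσi : 1 < σ i := (Fin.one_le_of_ne_zero fun h => hi.1 (hσ (h.trans h₀.symm))).lt_of_ne
    fun h => hi.2 (hσ (h.symm.trans h₁.symm))
  refine (le_of_not_gt fun hlt => hb ⟨0, i, j, k, by simpa using hij, ?_, h₁ ▸ hσi, hlt⟩).lt_of_ne
    fun h => hij.ne (hσ h).symm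
  rw [h₀, Fin.pos_iff_ne_zero, ← h₀]
  exact hσ.ne hk

lemma hasBadQuadruple_oneAt_iff (hk : k ≠ 0) :
    HasBadQuadruple (oneAt k) ↔ 2 ≤ (k : ℕ) ∧ (k : ℕ) + 3 ≤ n := by
  constructor
  · rintro ⟨p, a, b, c, hab, h₁, h₂, h₃⟩
    simp only [lt_iff_of_strictAntiOn (injective_oneAt hk) (oneAt_zero hk) (oneAt_self hk)
      (strictAntiOn_oneAt hk), Fin.lt_def, Fin.le_def, Ne, Fin.ext_iff, Fin.val_zero,
      Fin.val_sub_eq_ite] at hab h₁ h₂ h₃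
    have := a.isLt; have := b.isLt; have := c.isLt
    split_ifs at hab <;> omega
  · rintro ⟨hk₂, hk₃⟩
    obtain ⟨a, ha⟩ : ∃ a : Fin n, (a : ℕ) = k + 1 := ⟨⟨k + 1, by omega⟩, rfl⟩
    obtain ⟨b, hb⟩ : ∃ b : Fin n, (b : ℕ) = 1 := ⟨⟨1, by omega⟩, rfl⟩
    obtain ⟨c, hc⟩ : ∃ c : Fin n, (c : ℕ) = k + 2 := ⟨⟨k + 2, by omega⟩, rfl⟩
    refine ⟨k, a, b, c, ?_⟩
    simp only [lt_iff_of_strictAntiOn (injective_oneAt hk) (oneAt_zero hk) (oneAt_self hk)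
      (strictAntiOn_oneAt hk), Fin.lt_def, Fin.le_def, Ne, Fin.ext_iff, Fin.coe_ofNat_eq_mod,
      Nat.zero_mod, Fin.val_sub_eq_ite, ha, hb, hc]
    split_ifs <;> grind

lemma not_hasBadQuadruple_iff (hn : 3 ≤ n) {σ : Equiv.Perm (Fin n)} (h₀ : σ 0 = 0) :
    ¬HasBadQuadruple σ ↔ ∃ k ∈ admissibleOnePos n, ⇑σ = oneAt k := by
  constructor
  · intro hb
    set k := σ.symm 1
    have h₁ : σ k = 1 := σ.apply_symm_apply 1
    have hk : k ≠ 0 := by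
      rintro hk
      rw [hk, h₀, Fin.ext_iff, Fin.val_one', Nat.mod_eq_of_lt (by omega)] at h₁
      exact zero_ne_one h₁
    have hσ := eq_oneAt_of_strictAntiOn σ.injective h₀ hk h₁
      (strictAntiOn_of_not_hasBadQuadruple σ.injective h₀ hk h₁ hb)
    rw [hσ, hasBadQuadruple_oneAt_iff hk] at hb
    have := k.isLt
    have := Fin.val_ne_zero_iff.2 hk
    exact ⟨k, by simp only [admissibleOnePos, Set.mem_ofPred_eq]; omega, hσ⟩
  · rintro ⟨k, hk, hσ⟩
    rw [hσ, hasBadQuadruple_oneAt_iff (ne_zero_of_mem_admissibleOnePos hn hk)]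
    rcases hk with hk | hk | hk <;> omega

lemma avClasses_eq_image (hn : 3 ≤ n) :
    AvClasses n (fun σ => ¬HasBadQuadruple σ) =
      (fun k => CycClass (oneAt k)) '' admissibleOnePos n := by
  ext C
  constructor
  · rintro ⟨τ, rfl, hτ⟩
    obtain ⟨ρ, hρ₀, hρ⟩ := exists_rotSeq_apply_zero τ
    obtain ⟨k, hk, hρk⟩ := (not_hasBadQuadruple_iff hn hρ₀).1 (by rwa [hρ, hasBadQuadruple_rotSeq])
    exact ⟨k, hk, show CycClass (oneAt k) = _ by rw [← hρk, hρ, cycClass_rotSeq]⟩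
  · rintro ⟨k, hk, rfl⟩
    have hk₀ := ne_zero_of_mem_admissibleOnePos hn hk
    let σ := Equiv.ofBijective (oneAt k) (Finite.injective_iff_bijective.1 (injective_oneAt hk₀))
    exact ⟨σ, rfl, (not_hasBadQuadruple_iff hn (σ := σ) (oneAt_zero hk₀)).2 ⟨k, hk, rfl⟩⟩

lemma injOn_cycClass_oneAt (hn : 3 ≤ n) :
    Set.InjOn (fun k => CycClass (oneAt k)) (admissibleOnePos n) := by
  intro k hk k' hk' h
  have hk₀ := ne_zero_of_mem_admissibleOnePos hn hk
  have hk₀' := ne_zero_of_mem_admissibleOnePos hn hk'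
  have h' := eq_of_cycClass_eq (injective_oneAt hk₀) (oneAt_zero hk₀) (oneAt_zero hk₀') h
  exact injective_oneAt hk₀'
    ((congrFun h' k).symm.trans ((oneAt_self hk₀).trans (oneAt_self hk₀').symm))

end Classification

theorem card_av_1234_1324_1342 (n : ℕ) (hn : 4 ≤ n) :
    (AvClasses n fun σ => CycAvoids σ ![1,2,3,4] ∧ CycAvoids σ ![1,3,2,4] ∧ CycAvoids σ ![1,3,4,2]).ncard = 3 := by
  have : NeZero n := ⟨by omega⟩
  have hP : (fun σ : Fin n → Fin n =>
      CycAvoids σ ![1,2,3,4] ∧ CycAvoids σ ![1,3,2,4] ∧ CycAvoids σ ![1,3,4,2]) =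
      fun σ => ¬HasBadQuadruple σ := by
    funext σ
    simp only [hasBadQuadruple_iff, CycAvoids, not_or]
  rw [hP, avClasses_eq_image (by omega), (injOn_cycClass_oneAt (by omega)).ncard_image,
    ncard_admissibleOnePos hn]
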